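/- arXiv:1904.04753 — 4 statements merged into one kernel-verified Lean document; each statement's English description precedes it below -/
import Mathlib

section
/- The undirected graph G*_u is perfect: for every subset S of {1,…,12}, the independence number of the subgraph of G*_u induced by S equals the clique cover number of the subgraph of G*_u induced by S. -/
/-- The edge set of the undirected graph `G*ᵤ` on vertex set `{1, …, 12}`. -/
def guEdges : Finset (Finset ℕ) :=
  {{1, 5}, {1, 6}, {2, 5}, {2, 6}, {1, 9}, {1, 10}, {3, 9}, {3, 10},
   {5, 9}, {5, 11}, {7, 9}, {7, 11}}

/-- The simple undirected graph `G*ᵤ` on vertex set `{1, …, 12}` (viewed as a graph on `ℕ`;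
every vertex outside `{1, …, 12}` is isolated). -/
def Gu : SimpleGraph ℕ where
  Adj a b := a ≠ b ∧ ({a, b} : Finset ℕ) ∈ guEdges
  symm := by
    constructor
    intro a b h
    refine ⟨h.1.symm, ?_⟩
    rw [Finset.pair_comm]
    exact h.2
  loopless := by
    constructor
    intro a h
    exact h.1 rfl

/-- The independence number of the subgraph of `G` induced by the finite vertex set `S`:
the maximum cardinality of a set `T ⊆ S` of pairwise non-adjacent vertices. -/
noncomputable def alphaOn (G : SimpleGraph ℕ) (S : Finset ℕ) : ℕ :=
  sSup {n : ℕ | ∃ T : Finset ℕ, T ⊆ S ∧ T.card = n ∧ ∀ a ∈ T, ∀ b ∈ T, ¬ G.Adj a b}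

/-- The clique cover number of the subgraph of `G` induced by the finite vertex set `S`:
the minimum number of cliques (contained in `S`) needed to cover all vertices of `S`. -/
noncomputable def cliqueCoverOn (G : SimpleGraph ℕ) (S : Finset ℕ) : ℕ :=
  sInf {n : ℕ | ∃ C : Fin n → Finset ℕ,
    (∀ i, ↑(C i) ⊆ (S : Set ℕ) ∧ G.IsClique (C i)) ∧ ∀ v ∈ S, ∃ i, v ∈ C i}


/-!
An independent set meets each clique of a cover at most once, so `α ≤ θ` on every vertex set.
Conversely, call a clique `K ⊆ S` extending if every independent subset of `S \ K` can be
enlarged by a vertex of `K`. Then `α (S \ K) < α S` while `θ S ≤ θ (S \ K) + 1`, so if every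
nonempty vertex set has an extending clique, `θ ≤ α` follows by induction.

In `G*ᵤ` the edges of the triangle `1 5 9` lie on the induced 4-cycles `1 6 2 5`, `1 10 3 9` and
`5 11 7 9`. If `S` contains both ends of one of the edges `2 6`, `3 10`, `7 11`, that edge is
extending: the other neighbours of its two ends are distinct, hence adjacent, vertices of the
triangle. Otherwise `S` has a vertex whose neighbours in `S` form a clique, and its closed
neighbourhood is extending.
-/

open SimpleGraph Finset

section CliqueCover

variable {G : SimpleGraph ℕ} {S T K : Finset ℕ}

lemma isIndepSet_iff_forall_not_adj : G.IsIndepSet (T : Set ℕ) ↔ ∀ a ∈ T, ∀ b ∈ T, ¬ G.Adj a b :=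
  ⟨fun hT _ ha _ hb hab => hT ha hb hab.ne hab, fun hT _ ha _ hb _ => hT _ ha _ hb⟩

lemma bddAbove_card_indep : BddAbove
    {n | ∃ T : Finset ℕ, T ⊆ S ∧ T.card = n ∧ ∀ a ∈ T, ∀ b ∈ T, ¬ G.Adj a b} :=
  ⟨S.card, by rintro _ ⟨T, hTS, rfl, -⟩; exact card_le_card hTS⟩

lemma le_alphaOn (hTS : T ⊆ S) (hT : G.IsIndepSet (T : Set ℕ)) : T.card ≤ alphaOn G S := by
  unfold alphaOn
  exact le_csSup bddAbove_card_indep ⟨T, hTS, rfl, isIndepSet_iff_forall_not_adj.1 hT⟩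

lemma exists_isIndepSet_card_eq_alphaOn (G : SimpleGraph ℕ) (S : Finset ℕ) :
    ∃ T ⊆ S, G.IsIndepSet (T : Set ℕ) ∧ T.card = alphaOn G S := by
  have hmem : alphaOn G S ∈
      {n | ∃ T : Finset ℕ, T ⊆ S ∧ T.card = n ∧ ∀ a ∈ T, ∀ b ∈ T, ¬ G.Adj a b} :=
    Nat.sSup_mem ⟨0, ∅, by simp⟩ bddAbove_card_indep
  obtain ⟨T, hTS, hcard, hT⟩ := hmem
  exact ⟨T, hTS, isIndepSet_iff_forall_not_adj.2 hT, hcard⟩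

lemma cliqueCoverOn_le {n : ℕ} (C : Fin n → Finset ℕ)
    (hC : ∀ i, ↑(C i) ⊆ (S : Set ℕ) ∧ G.IsClique (C i)) (hcov : ∀ v ∈ S, ∃ i, v ∈ C i) :
    cliqueCoverOn G S ≤ n :=
  Nat.sInf_le ⟨C, hC, hcov⟩

lemma exists_cliqueCover_card_eq_cliqueCoverOn (G : SimpleGraph ℕ) (S : Finset ℕ) :
    ∃ C : Fin (cliqueCoverOn G S) → Finset ℕ,
      (∀ i, ↑(C i) ⊆ (S : Set ℕ) ∧ G.IsClique (C i)) ∧ ∀ v ∈ S, ∃ i, v ∈ C i := by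
  refine Nat.sInf_mem (s := {n | ∃ C : Fin n → Finset ℕ,
      (∀ i, ↑(C i) ⊆ (S : Set ℕ) ∧ G.IsClique (C i)) ∧ ∀ v ∈ S, ∃ i, v ∈ C i})
    ⟨S.card, fun i => {(S.equivFin.symm i : ℕ)}, fun i => ?_, fun v hv => ?_⟩
  · simp
  · exact ⟨S.equivFin ⟨v, hv⟩, by simp⟩

lemma card_le_of_isIndepSet_of_cliqueCover {n : ℕ} (hTS : T ⊆ S) (hT : G.IsIndepSet (T : Set ℕ))
    (C : Fin n → Finset ℕ) (hC : ∀ i, G.IsClique (C i : Set ℕ)) (hcov : ∀ v ∈ S, ∃ i, v ∈ C i) :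
    T.card ≤ n := by
  rcases T.eq_empty_or_nonempty with rfl | ⟨v, hv⟩
  · simp
  have : Nonempty (Fin n) := ⟨(hcov v (hTS hv)).choose⟩
  choose! f hf using fun v (hv : v ∈ T) => hcov v (hTS hv)
  have hinj : Set.InjOn f T := fun a ha b hb hab => by
    by_contra hne
    exact hT ha hb hne ((hC (f a)) (hf a ha) (hab ▸ hf b hb) hne)
  simpa using card_le_card_of_injOn f (fun a _ => mem_coe.2 (mem_univ (f a))) hinj

lemma alphaOn_le_cliqueCoverOn : alphaOn G S ≤ cliqueCoverOn G S := by
  obtain ⟨T, hTS, hT, hcard⟩ := exists_isIndepSet_card_eq_alphaOn G S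
  obtain ⟨C, hC, hcov⟩ := exists_cliqueCover_card_eq_cliqueCoverOn G S
  exact hcard ▸ card_le_of_isIndepSet_of_cliqueCover hTS hT C (fun i => (hC i).2) hcov

lemma cliqueCoverOn_le_cliqueCoverOn_sdiff_add_one (hKS : K ⊆ S) (hK : G.IsClique (K : Set ℕ)) :
    cliqueCoverOn G S ≤ cliqueCoverOn G (S \ K) + 1 := by
  obtain ⟨C, hC, hcov⟩ := exists_cliqueCover_card_eq_cliqueCoverOn G (S \ K)
  refine cliqueCoverOn_le (Fin.cons K C) (fun i => ?_) fun v hv => ?_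
  · refine Fin.cases ?_ (fun i => ?_) i
    · simpa using ⟨hKS, hK⟩
    · simpa using ⟨(hC i).1.trans (by simp), (hC i).2⟩
  · by_cases hvK : v ∈ K
    · exact ⟨0, by simpa using hvK⟩
    · obtain ⟨i, hi⟩ := hcov v (mem_sdiff.2 ⟨hv, hvK⟩)
      exact ⟨i.succ, by simpa using hi⟩

def IsExtendingClique (G : SimpleGraph ℕ) (S K : Finset ℕ) : Prop :=
  K ⊆ S ∧ G.IsClique (K : Set ℕ) ∧
    ∀ I ⊆ S \ K, G.IsIndepSet (I : Set ℕ) → ∃ k ∈ K, ∀ i ∈ I, ¬ G.Adj k i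

namespace IsExtendingClique

lemma nonempty (hK : IsExtendingClique G S K) : K.Nonempty := by
  obtain ⟨k, hk, -⟩ := hK.2.2 ∅ (empty_subset _) (by simp)
  exact ⟨k, hk⟩

lemma alphaOn_sdiff_lt (hK : IsExtendingClique G S K) : alphaOn G (S \ K) < alphaOn G S := by
  obtain ⟨I, hIS, hI, hcard⟩ := exists_isIndepSet_card_eq_alphaOn G (S \ K)
  obtain ⟨k, hk, hkI⟩ := hK.2.2 I hIS hI
  have hkI' : k ∉ I := fun h => (mem_sdiff.1 (hIS h)).2 hk
  have hindep : G.IsIndepSet (insert k I : Set ℕ) :=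
    hI.insert fun i hi _ => ⟨hkI i hi, fun h => hkI i hi h.symm⟩
  calc alphaOn G (S \ K) < (insert k I).card := by rw [card_insert_of_notMem hkI', hcard]; omega
    _ ≤ alphaOn G S :=
      le_alphaOn (insert_subset (hK.1 hk) (hIS.trans sdiff_subset)) (by simpa using hindep)

end IsExtendingClique

lemma cliqueCoverOn_le_alphaOn_of_forall_exists_isExtendingClique
    (h : ∀ S : Finset ℕ, S.Nonempty → ∃ K, IsExtendingClique G S K) (S : Finset ℕ) :
    cliqueCoverOn G S ≤ alphaOn G S := by
  induction S using Finset.strongInduction with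
  | H S ih =>
    rcases S.eq_empty_or_nonempty with rfl | hS
    · exact (cliqueCoverOn_le Fin.elim0 (fun i => i.elim0) (by simp)).trans (Nat.zero_le _)
    obtain ⟨K, hK⟩ := h S hS
    calc cliqueCoverOn G S ≤ cliqueCoverOn G (S \ K) + 1 :=
          cliqueCoverOn_le_cliqueCoverOn_sdiff_add_one hK.1 hK.2.1
      _ ≤ alphaOn G (S \ K) + 1 := by gcongr; exact ih _ (sdiff_ssubset hK.1 hK.nonempty)
      _ ≤ alphaOn G S := hK.alphaOn_sdiff_lt

lemma exists_isExtendingClique_of_isClique_neighbors {v : ℕ} (hv : v ∈ S)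
    (hN : G.IsClique {w | w ∈ S ∧ G.Adj v w}) : ∃ K, IsExtendingClique G S K := by
  classical
  refine ⟨insert v (S.filter (G.Adj v)), insert_subset hv (filter_subset _ _), ?_, ?_⟩
  · simpa using hN.insert fun w hw _ => hw.2
  · intro I hIS _
    refine ⟨v, mem_insert_self _ _, fun i hi hvi => ?_⟩
    have := hIS hi
    simp only [mem_sdiff, mem_insert, mem_filter, not_or, not_and] at this
    exact this.2.2 this.1 hvi

lemma isExtendingClique_pair {x y : ℕ} (hx : x ∈ S) (hy : y ∈ S) (hxy : G.Adj x y)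
    (h : ∀ a ∈ S, ∀ b ∈ S, G.Adj x a → G.Adj y b → a = y ∨ b = x ∨ G.Adj a b) :
    IsExtendingClique G S {x, y} := by
  refine ⟨insert_subset hx (singleton_subset_iff.2 hy), by simpa using fun _ => hxy, ?_⟩
  intro I hIS hI
  by_contra! hblocked
  obtain ⟨a, ha, hxa⟩ := hblocked x (by simp)
  obtain ⟨b, hb, hyb⟩ := hblocked y (by simp)
  have ha' := hIS ha
  have hb' := hIS hb
  simp only [mem_sdiff, mem_insert, mem_singleton, not_or] at ha' hb'
  rcases h a ha'.1 b hb'.1 hxa hyb with rfl | rfl | hab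
  · exact ha'.2.2 rfl
  · exact hb'.2.1 rfl
  · exact hI ha hb hab.ne hab

end CliqueCover

instance : DecidableRel Gu.Adj := fun a b => inferInstanceAs (Decidable (a ≠ b ∧ _))

lemma Gu_adj_lt {a b : ℕ} (h : Gu.Adj a b) : b < 12 :=
  (by decide : ∀ e ∈ guEdges, ∀ x ∈ e, x < 12) _ h.2 b (by simp)

/-- `(v, p, q)`: the neighbours of `v` in `G*ᵤ` are its partner `p` on the same 4-cycle and the
triangle vertex `q`. -/
def pendants : List (ℕ × ℕ × ℕ) :=
  [(2, 6, 5), (6, 2, 1), (3, 10, 9), (10, 3, 1), (7, 11, 9), (11, 7, 5)]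

lemma Gu_adj_pendant {v p q w : ℕ} (ht : (v, p, q) ∈ pendants) (h : Gu.Adj v w) :
    w = p ∨ w = q :=
  (by decide : ∀ t ∈ pendants, ∀ w < 12, Gu.Adj t.1 w → w = t.2.1 ∨ w = t.2.2) _ ht w
    (Gu_adj_lt h) h

lemma Gu_adj_pendant_partner {v p q : ℕ} (ht : (v, p, q) ∈ pendants) : Gu.Adj v p :=
  (by decide : ∀ t ∈ pendants, Gu.Adj t.1 t.2.1) _ ht

lemma Gu_adj_of_adj_pendant {v p q a b : ℕ} (ht : (v, p, q) ∈ pendants) (ha : Gu.Adj v a)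
    (hb : Gu.Adj p b) : a = p ∨ b = v ∨ Gu.Adj a b :=
  (by decide : ∀ t ∈ pendants, ∀ a < 12, ∀ b < 12, Gu.Adj t.1 a → Gu.Adj t.2.1 b →
    a = t.2.1 ∨ b = t.1 ∨ Gu.Adj a b) _ ht a (Gu_adj_lt ha) b (Gu_adj_lt hb) ha hb

lemma Gu_adj_mem_triangle_or_pendant {v w : ℕ} (h : Gu.Adj v w) :
    v ∈ ({1, 5, 9} : Set ℕ) ∨ ∃ t ∈ pendants, t.1 = v := by
  have := (by decide : ∀ v < 12, ∀ w < 12, Gu.Adj v w →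
    v ∈ ({1, 5, 9} : Finset ℕ) ∨ ∃ t ∈ pendants, t.1 = v) v (Gu_adj_lt h.symm) w (Gu_adj_lt h) h
  simpa using this

lemma Gu_isClique_triangle : Gu.IsClique ({1, 5, 9} : Set ℕ) := by
  simp only [isClique_insert, isClique_singleton, Set.mem_insert_iff, Set.mem_singleton_iff,
    forall_eq_or_imp, forall_eq]
  decide

lemma Gu_exists_isExtendingClique {S : Finset ℕ} (hS : S.Nonempty) :
    ∃ K, IsExtendingClique Gu S K := by
  by_cases hpendant : ∃ t ∈ pendants, t.1 ∈ S
  · obtain ⟨⟨v, p, q⟩, ht, hv⟩ := hpendant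
    by_cases hp : p ∈ S
    · exact ⟨_, isExtendingClique_pair hv hp (Gu_adj_pendant_partner ht)
        fun a _ b _ => Gu_adj_of_adj_pendant ht⟩
    · refine exists_isExtendingClique_of_isClique_neighbors hv ((isClique_singleton q).subset ?_)
      rintro w ⟨hw, hvw⟩
      rcases Gu_adj_pendant ht hvw with rfl | rfl
      exacts [absurd hw hp, rfl]
  push Not at hpendant
  by_cases houtside : ∃ v ∈ S, v ∉ ({1, 5, 9} : Set ℕ)
  · obtain ⟨v, hv, hvT⟩ := houtside
    refine exists_isExtendingClique_of_isClique_neighbors hv (isClique_empty.subset ?_)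
    rintro w ⟨-, hvw⟩
    rcases Gu_adj_mem_triangle_or_pendant hvw with h | ⟨t, ht, rfl⟩
    exacts [hvT h, hpendant t ht hv]
  push Not at houtside
  obtain ⟨v, hv⟩ := hS
  exact exists_isExtendingClique_of_isClique_neighbors hv
    (Gu_isClique_triangle.subset fun w hw => houtside w hw.1)

theorem Gu_is_perfect_general (S : Finset ℕ) :
    alphaOn Gu S = cliqueCoverOn Gu S :=
  le_antisymm alphaOn_le_cliqueCoverOn
    (cliqueCoverOn_le_alphaOn_of_forall_exists_isExtendingClique
      (fun _ => Gu_exists_isExtendingClique) S)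

theorem Gu_is_perfect (S : Finset ℕ) (hS : S ⊆ Finset.Icc 1 12) :
    alphaOn Gu S = cliqueCoverOn Gu S :=
  Gu_is_perfect_general S
end

section
/- The graph G*_u contains no odd antihole: there is no subset S of {1,…,12} of odd cardinality at least 5 such that the subgraph of the complement of G*_u induced by S is a cycle. -/
/-- The subgraph of `G` induced by `S` is a cycle on `2 * k + 5` vertices: the vertices of `S`
can be ordered `v 0, v 1, …` (cyclically) so that the edges of `G` between vertices of `S` are
exactly the consecutive ones. -/
def InducedIsOddCycle (G : SimpleGraph ℕ) (S : Finset ℕ) (k : ℕ) : Prop :=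
  S.card = 2 * k + 5 ∧
    ∃ v : Fin (2 * k + 5) → ℕ, Function.Injective v ∧ (∀ i, v i ∈ S) ∧
      ∀ i j, G.Adj (v i) (v j) ↔ (j = i + 1 ∨ i = j + 1)

/-!
If `S` induces a cycle on `n = 2k + 5` vertices in the complement of `G*ᵤ`, every vertex of `S`
is adjacent in `G*ᵤ` to all of `S` except itself and its two cycle neighbours, so it has exactly
`n - 3` neighbours in `S`. For `n ≥ 7` this is at least `4`, but only `1`, `5` and `9` have more
than two neighbours in `G*ᵤ`. For `n = 5`, `S` would induce a `2`-regular graph, i.e. a `5`-cycle,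
in `G*ᵤ`; a finite check over the five-element sets of non-isolated vertices excludes this.
-/

open Finset SimpleGraph

theorem InducedIsOddCycle.exists_embedding {G : SimpleGraph ℕ} {S : Finset ℕ} {k : ℕ}
    (h : InducedIsOddCycle Gᶜ S k) :
    ∃ v : Fin (2 * k + 5) ↪ ℕ, univ.map v = S ∧
      ∀ i j, G.Adj (v i) (v j) ↔ (cycleGraph (2 * k + 5))ᶜ.Adj i j := by
  obtain ⟨hcard, v, hinj, hvS, hadj⟩ := h
  refine ⟨⟨v, hinj⟩, eq_of_subset_of_card_le (by simpa [subset_iff]) (by simp [hcard]), ?_⟩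
  intro i j
  have hG := compl_adj Gᶜ (v i) (v j)
  rw [compl_compl] at hG
  rw [Function.Embedding.coeFn_mk, hG, hadj, compl_adj, cycleGraph_adj, hinj.ne_iff,
    sub_eq_iff_eq_add', sub_eq_iff_eq_add']
  tauto

theorem InducedIsOddCycle.card_filter_adj {G : SimpleGraph ℕ} [DecidableRel G.Adj]
    {S : Finset ℕ} {k : ℕ} (h : InducedIsOddCycle Gᶜ S k) {x : ℕ} (hx : x ∈ S) :
    #{y ∈ S | G.Adj x y} = 2 * k + 2 := by
  obtain ⟨v, rfl, hadj⟩ := h.exists_embedding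
  obtain ⟨i, -, rfl⟩ := mem_map.1 hx
  have hdeg : (cycleGraph (2 * k + 5))ᶜ.degree i = 2 * k + 2 := by
    have hcycle : (cycleGraph (2 * k + 2 + 3)).degree i = 2 := cycleGraph_degree_three_le
    rw [degree_compl, Fintype.card_fin, hcycle]
    omega
  rw [filter_map, card_map, ← hdeg, ← card_neighborFinset_eq_degree, neighborFinset_eq_filter]
  simp only [Function.comp_def, hadj]

instance inst_s4 : DecidableRel Gu.Adj := fun a b => inferInstanceAs (Decidable (a ≠ b ∧ _))

def guSupport : Finset ℕ := {1, 2, 3, 5, 6, 7, 9, 10, 11}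

theorem Gu_adj_mem_guSupport {x y : ℕ} (h : Gu.Adj x y) : x ∈ guSupport := by
  have : guEdges.sup id = guSupport := by decide
  exact this ▸ mem_sup.2 ⟨_, h.2, mem_insert_self x {y}⟩

theorem card_filter_Gu_adj_le_two :
    ∀ x ∈ guSupport, x ∉ ({1, 5, 9} : Finset ℕ) → #{y ∈ guSupport | Gu.Adj x y} ≤ 2 := by
  decide

theorem exists_card_filter_Gu_adj_ne_two :
    ∀ S ∈ guSupport.powersetCard 5, ∃ x ∈ S, #{y ∈ S | Gu.Adj x y} ≠ 2 := by
  decide +kernel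

/-- `G*ᵤ` contains no odd antihole: no subset `S ⊆ {1, …, 12}` of odd cardinality at least `5`
induces a cycle in the complement of `G*ᵤ`. -/
theorem Gu_has_no_odd_antihole :
    ¬ ∃ (S : Finset ℕ) (k : ℕ), S ⊆ Finset.Icc 1 12 ∧ InducedIsOddCycle Guᶜ S k := by
  rintro ⟨S, k, -, hS⟩
  have hdeg : ∀ x ∈ S, #{y ∈ S | Gu.Adj x y} = 2 * k + 2 := fun x hx => hS.card_filter_adj hx
  have hsupp : S ⊆ guSupport := fun x hx => by
    obtain ⟨y, hy⟩ : ({y ∈ S | Gu.Adj x y}).Nonempty := card_pos.1 (by rw [hdeg x hx]; omega)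
    exact Gu_adj_mem_guSupport (mem_filter.1 hy).2
  rcases k with _ | k
  · obtain ⟨x, hx, hne⟩ := exists_card_filter_Gu_adj_ne_two S (mem_powersetCard.2 ⟨hsupp, hS.1⟩)
    exact hne (hdeg x hx)
  · have hhigh : S ⊆ {1, 5, 9} := fun x hx => by
      by_contra hx'
      have := (card_le_card (filter_subset_filter (Gu.Adj x) hsupp)).trans
        (card_filter_Gu_adj_le_two x (hsupp hx) hx')
      rw [hdeg x hx] at this
      omega
    have := card_le_card hhigh
    simp [hS.1] at this
end

section
/- Let X, Y, Z, U be random variables on a probability space, each taking values in a finite set, such that X, Y, Z are mutually independent and H(U | (X,Y)) = 0 and H(U | (X,Z)) = 0. Then H(U | X) = 0. -/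
/-!
`H(U | V) = 0` says exactly that `U = f(V)` almost surely for some `f`. Hence
`U = f(X, Y) = g(X, Z)` almost surely. By independence, every atom `{X = a, Y = b, Z = c}` whose
three marginals have positive mass has positive mass itself, so `f(a, b) = g(a, c)` for all such
`a, b, c`. Fixing a value `c₀` that `Z` takes with positive probability, `U = g(X, c₀)` almost
surely, i.e. `H(U | X) = 0`.
-/

open MeasureTheory

/-- The Shannon entropy (in nats) of a random variable `X` taking values in a finite set:
`H(X) = ∑ₛ -P(X = s) log P(X = s)`. -/
noncomputable def entropy {Ω S : Type*} [MeasurableSpace Ω] [Fintype S]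
    (μ : Measure Ω) (X : Ω → S) : ℝ :=
  ∑ s : S, Real.negMulLog ((μ (X ⁻¹' {s})).toReal)

/-- The conditional Shannon entropy `H(U | V) = H(U, V) - H(V)` of finitely valued
random variables. -/
noncomputable def condEntropy {Ω S T : Type*} [MeasurableSpace Ω] [Fintype S] [Fintype T]
    (μ : Measure Ω) (U : Ω → S) (V : Ω → T) : ℝ :=
  entropy μ (fun ω => (U ω, V ω)) - entropy μ V

open Real

theorem mul_log_sub_log_nonneg {p q : ℝ} (hp : 0 ≤ p) (hpq : p ≤ q) :
    0 ≤ p * (log q - log p) := by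
  rcases hp.eq_or_lt with rfl | hp
  · simp
  · exact mul_nonneg hp.le (sub_nonneg.2 (log_le_log hp hpq))

theorem mul_log_sub_log_eq_zero_iff {p q : ℝ} (hp : 0 ≤ p) (hpq : p ≤ q) :
    p * (log q - log p) = 0 ↔ p = 0 ∨ p = q := by
  rcases hp.eq_or_lt with rfl | hp
  · simp
  · have hq := hp.trans_le hpq
    simp only [mul_eq_zero, hp.ne', sub_eq_zero, false_or]
    exact ⟨fun h => (log_injOn_pos hq hp h).symm, fun h => h ▸ rfl⟩

section CondEntropy

variable {Ω S T : Type*} [MeasurableSpace Ω] [Fintype S] [Fintype T]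
  [MeasurableSpace S] [MeasurableSingletonClass S]
  {μ : Measure Ω} [IsFiniteMeasure μ] {U : Ω → S} {V : Ω → T}

theorem measureReal_eq_sum_preimage_inter (hU : Measurable U) (W : Set Ω) :
    μ.real W = ∑ s, μ.real (U ⁻¹' {s} ∩ W) := by
  rw [← measureReal_restrict_apply_univ, ← Set.preimage_univ (f := U), ← Finset.coe_univ,
    ← sum_measureReal_preimage_singleton _ fun s _ => hU (measurableSet_singleton s)]
  exact Finset.sum_congr rfl fun s _ => measureReal_restrict_apply (hU (measurableSet_singleton s))

theorem condEntropy_eq_sum (hU : Measurable U) :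
    condEntropy μ U V = ∑ t, ∑ s, μ.real (U ⁻¹' {s} ∩ V ⁻¹' {t}) *
      (log (μ.real (V ⁻¹' {t})) - log (μ.real (U ⁻¹' {s} ∩ V ⁻¹' {t}))) := by
  have hpair (s : S) (t : T) :
      (fun ω => (U ω, V ω)) ⁻¹' {(s, t)} = U ⁻¹' {s} ∩ V ⁻¹' {t} := by
    rw [← Set.singleton_prod_singleton, Set.mk_preimage_prod]
  simp only [condEntropy, entropy, ← measureReal_def, Fintype.sum_prod_type, hpair]
  rw [Finset.sum_comm, ← Finset.sum_sub_distrib]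
  refine Finset.sum_congr rfl fun t _ => ?_
  have hmarg : negMulLog (μ.real (V ⁻¹' {t})) =
      ∑ s, -μ.real (U ⁻¹' {s} ∩ V ⁻¹' {t}) * log (μ.real (V ⁻¹' {t})) := by
    rw [← Finset.sum_mul, Finset.sum_neg_distrib, ← measureReal_eq_sum_preimage_inter hU,
      negMulLog]
  rw [hmarg, ← Finset.sum_sub_distrib]
  refine Finset.sum_congr rfl fun s _ => ?_
  rw [negMulLog]
  ring

theorem condEntropy_eq_zero_iff (hU : Measurable U) :
    condEntropy μ U V = 0 ↔ ∀ s t, μ.real (U ⁻¹' {s} ∩ V ⁻¹' {t}) = 0 ∨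
      μ.real (U ⁻¹' {s} ∩ V ⁻¹' {t}) = μ.real (V ⁻¹' {t}) := by
  have hle (s : S) (t : T) : μ.real (U ⁻¹' {s} ∩ V ⁻¹' {t}) ≤ μ.real (V ⁻¹' {t}) :=
    measureReal_mono Set.inter_subset_right
  have hterm (t : T) (s : S) := mul_log_sub_log_nonneg measureReal_nonneg (hle s t)
  rw [condEntropy_eq_sum hU, Fintype.sum_eq_zero_iff_of_nonneg
    fun t => Finset.sum_nonneg fun s _ => hterm t s, forall_comm, funext_iff]
  refine forall_congr' fun t => ?_
  rw [Pi.zero_apply, Fintype.sum_eq_zero_iff_of_nonneg (hterm t), funext_iff]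
  exact forall_congr' fun s => mul_log_sub_log_eq_zero_iff measureReal_nonneg (hle s t)

theorem exists_ae_eq_comp_of_condEntropy_eq_zero [Nonempty S] (hU : Measurable U)
    (h : condEntropy μ U V = 0) : ∃ f : T → S, U =ᵐ[μ] f ∘ V := by
  have hcell := (condEntropy_eq_zero_iff hU).1 h
  have hfiber (t : T) : ∃ s, ∀ᵐ ω ∂μ, V ω = t → U ω = s := by
    by_cases ht : μ.real (V ⁻¹' {t}) = 0
    · exact ⟨Classical.arbitrary S, ae_iff.2 <| measure_mono_null
        (fun ω hω => (Classical.not_imp.1 hω).1) ((measureReal_eq_zero_iff).1 ht)⟩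
    rw [measureReal_eq_sum_preimage_inter hU] at ht
    obtain ⟨s, -, hs⟩ := Finset.exists_ne_zero_of_sum_ne_zero ht
    have hnull : μ.real (V ⁻¹' {t} \ U ⁻¹' {s}) = 0 := by
      have hsplit := measureReal_inter_add_sdiff (μ := μ) (s := V ⁻¹' {t})
        (hU (measurableSet_singleton s))
      rw [Set.inter_comm, (hcell s t).resolve_left hs] at hsplit
      linarith
    exact ⟨s, ae_iff.2 <| measure_mono_null (fun ω hω => Classical.not_imp.1 hω)
      ((measureReal_eq_zero_iff).1 hnull)⟩
  choose f hf using hfiber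
  exact ⟨f, (ae_all_iff.2 hf).mono fun ω hω => hω _ rfl⟩

theorem condEntropy_eq_zero_of_ae_eq_comp (hU : Measurable U) {f : T → S}
    (h : U =ᵐ[μ] f ∘ V) : condEntropy μ U V = 0 := by
  refine (condEntropy_eq_zero_iff hU).2 fun s t => ?_
  rw [measureReal_congr ((h.preimage {s}).inter (Filter.EventuallyEq.refl _ (V ⁻¹' {t})))]
  by_cases hst : f t = s
  · refine Or.inr (congrArg μ.real (Set.inter_eq_right.2 fun ω hω => ?_))
    exact (congrArg f hω).trans hst
  · have hempty : (f ∘ V) ⁻¹' {s} ∩ V ⁻¹' {t} = ∅ :=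
      Set.eq_empty_of_forall_notMem fun ω hω => hst (hω.2 ▸ hω.1)
    exact Or.inl (by rw [hempty, measureReal_empty])

end CondEntropy

theorem ae_measure_preimage_singleton_ne_zero {Ω β : Type*} [MeasurableSpace Ω] [Countable β]
    (μ : Measure Ω) (X : Ω → β) : ∀ᵐ ω ∂μ, μ (X ⁻¹' {X ω}) ≠ 0 := by
  refine ae_iff.2 (measure_mono_null (t := ⋃ b : {b // μ (X ⁻¹' {b}) = 0}, X ⁻¹' {b.1})
    (fun ω hω => Set.mem_iUnion.2 ⟨⟨X ω, not_not.1 hω⟩, rfl⟩)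
    (measure_iUnion_null fun b => b.2))

theorem exists_ae_eq_comp_of_indep {Ω A B C D : Type*} [MeasurableSpace Ω]
    [Countable A] [Countable B] [Countable C] {μ : Measure Ω} [NeZero μ]
    {X : Ω → A} {Y : Ω → B} {Z : Ω → C}
    (hindep : ∀ a b c, μ (X ⁻¹' {a} ∩ Y ⁻¹' {b} ∩ Z ⁻¹' {c}) =
      μ (X ⁻¹' {a}) * μ (Y ⁻¹' {b}) * μ (Z ⁻¹' {c}))
    {f : A × B → D} {g : A × C → D}
    (hfg : (fun ω => f (X ω, Y ω)) =ᵐ[μ] fun ω => g (X ω, Z ω)) :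
    ∃ h : A → D, (fun ω => f (X ω, Y ω)) =ᵐ[μ] h ∘ X := by
  have hatom {a b c} (ha : μ (X ⁻¹' {a}) ≠ 0) (hb : μ (Y ⁻¹' {b}) ≠ 0)
      (hc : μ (Z ⁻¹' {c}) ≠ 0) : f (a, b) = g (a, c) := by
    have hpos : μ (X ⁻¹' {a} ∩ Y ⁻¹' {b} ∩ Z ⁻¹' {c}) ≠ 0 := by
      rw [hindep]
      exact mul_ne_zero (mul_ne_zero ha hb) hc
    obtain ⟨ω, ⟨⟨rfl, rfl⟩, rfl⟩, hω⟩ :=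
      Measure.exists_mem_of_measure_ne_zero_of_ae hpos (ae_restrict_of_ae hfg)
    exact hω
  obtain ⟨ω₀, hω₀⟩ := (ae_measure_preimage_singleton_ne_zero μ Z).exists
  refine ⟨fun a => g (a, Z ω₀), ?_⟩
  filter_upwards [ae_measure_preimage_singleton_ne_zero μ X,
    ae_measure_preimage_singleton_ne_zero μ Y] with ω hX hY using hatom hX hY hω₀

theorem condEntropy_eq_zero_of_two_sides_general
    {Ω A B C D : Type*} [MeasurableSpace Ω]
    [Fintype A] [Fintype B] [Fintype C] [Fintype D]
    [MeasurableSpace D] [MeasurableSingletonClass D]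
    (μ : Measure Ω) [IsProbabilityMeasure μ]
    (X : Ω → A) (Y : Ω → B) (Z : Ω → C) (U : Ω → D)
    (hU : Measurable U)
    (hindep : ∀ (a : A) (b : B) (c : C),
      μ (X ⁻¹' {a} ∩ Y ⁻¹' {b} ∩ Z ⁻¹' {c}) =
        μ (X ⁻¹' {a}) * μ (Y ⁻¹' {b}) * μ (Z ⁻¹' {c}))
    (hUXY : condEntropy μ U (fun ω => (X ω, Y ω)) = 0)
    (hUXZ : condEntropy μ U (fun ω => (X ω, Z ω)) = 0) :
    condEntropy μ U X = 0 := by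
  have : Nonempty D := ⟨U (nonempty_of_isProbabilityMeasure μ).some⟩
  obtain ⟨f, hf⟩ := exists_ae_eq_comp_of_condEntropy_eq_zero hU hUXY
  obtain ⟨g, hg⟩ := exists_ae_eq_comp_of_condEntropy_eq_zero hU hUXZ
  obtain ⟨h, hh⟩ := exists_ae_eq_comp_of_indep hindep (hf.symm.trans hg)
  exact condEntropy_eq_zero_of_ae_eq_comp hU (hf.trans hh)

/-- If `X, Y, Z` are mutually independent finitely valued random variables and
`H(U | (X, Y)) = H(U | (X, Z)) = 0`, then `H(U | X) = 0`. -/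
theorem condEntropy_eq_zero_of_two_sides
    {Ω A B C D : Type*} [MeasurableSpace Ω]
    [Fintype A] [Fintype B] [Fintype C] [Fintype D]
    [MeasurableSpace A] [MeasurableSingletonClass A]
    [MeasurableSpace B] [MeasurableSingletonClass B]
    [MeasurableSpace C] [MeasurableSingletonClass C]
    [MeasurableSpace D] [MeasurableSingletonClass D]
    (μ : Measure Ω) [IsProbabilityMeasure μ]
    (X : Ω → A) (Y : Ω → B) (Z : Ω → C) (U : Ω → D)
    (hX : Measurable X) (hY : Measurable Y) (hZ : Measurable Z) (hU : Measurable U)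
    (hindep : ∀ (a : A) (b : B) (c : C),
      μ (X ⁻¹' {a} ∩ Y ⁻¹' {b} ∩ Z ⁻¹' {c}) =
        μ (X ⁻¹' {a}) * μ (Y ⁻¹' {b}) * μ (Z ⁻¹' {c}))
    (hUXY : condEntropy μ U (fun ω => (X ω, Y ω)) = 0)
    (hUXZ : condEntropy μ U (fun ω => (X ω, Z ω)) = 0) :
    condEntropy μ U X = 0 :=
  condEntropy_eq_zero_of_two_sides_general μ X Y Z U hU hindep hUXY hUXZ
end

section
/- Let W and K be independent random variables on a probability space, where W is uniformly distributed on a finite nonempty set B and K takes values in a finite set. Let D be a finite set with |D| ≤ |B|, let f : B × (values of K) → D, and set C = f(W, K). If there is a function g with g(C, K) = W almost surely, then |D| = |B|, C is uniformly distributed on D, and C is independent of K. -/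
/-!
Since `W` is recovered from `(f (W, K), K)` almost surely and every atom `{W = b, K = t}` with
`P(K = t) > 0` has positive probability `P(K = t) / |B|`, the map `f (·, t)` has the left inverse
`g (·, t)` for each such `t`. Together with `|D| ≤ |B|` it is then a bijection `B ≃ D`, so
`{C = d, K = t} = {W = b, K = t}` for the unique `b` with `f (b, t) = d`, which has probability
`P(K = t) / |D|`. Summing over `t` gives the uniform marginal of `C`, and then independence.
-/

open MeasureTheory

section Partition

variable {Ω T : Type*} [MeasurableSpace Ω] [Fintype T] [MeasurableSpace T]
  [MeasurableSingletonClass T] {μ : Measure Ω} {K : Ω → T}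

theorem sum_measure_inter_preimage_singleton (hK : Measurable K) (s : Set Ω) :
    ∑ t, μ (s ∩ K ⁻¹' {t}) = μ s := by
  have h := sum_measure_preimage_singleton (μ := μ.restrict s) Finset.univ
    (fun t _ => hK (measurableSet_singleton t))
  simpa [Measure.restrict_apply (hK (measurableSet_singleton _)), Set.inter_comm] using h

theorem exists_measure_preimage_singleton_ne_zero [IsProbabilityMeasure μ] (hK : Measurable K) :
    ∃ t, μ (K ⁻¹' {t}) ≠ 0 := by
  have h := sum_measure_inter_preimage_singleton (μ := μ) hK Set.univ
  simp only [Set.univ_inter, measure_univ] at h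
  obtain ⟨t, -, ht⟩ := Finset.exists_ne_zero_of_sum_ne_zero (h ▸ one_ne_zero)
  exact ⟨t, ht⟩

theorem measure_eq_of_measure_inter_preimage_singleton_eq_mul [IsProbabilityMeasure μ]
    (hK : Measurable K) {s : Set Ω} {c : ENNReal}
    (h : ∀ t, μ (s ∩ K ⁻¹' {t}) = c * μ (K ⁻¹' {t})) : μ s = c := by
  calc μ s = ∑ t, μ (s ∩ K ⁻¹' {t}) := (sum_measure_inter_preimage_singleton hK s).symm
    _ = c * ∑ t, μ (Set.univ ∩ K ⁻¹' {t}) := by simp only [h, Set.univ_inter, Finset.mul_sum]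
    _ = c := by rw [sum_measure_inter_preimage_singleton hK, measure_univ, mul_one]

end Partition

section Decoding

variable {Ω B T D : Type*} {W : Ω → B} {K : Ω → T} {f : B × T → D}

theorem preimage_inter_preimage_eq_of_injective {t : T}
    (hf : Function.Injective (fun b => f (b, t))) (b : B) :
    (fun ω => f (W ω, K ω)) ⁻¹' {f (b, t)} ∩ K ⁻¹' {t} = W ⁻¹' {b} ∩ K ⁻¹' {t} := by
  ext ω
  simp only [Set.mem_inter_iff, Set.mem_preimage, Set.mem_singleton_iff]
  constructor
  · rintro ⟨hfb, rfl⟩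
    exact ⟨hf hfb, rfl⟩
  · rintro ⟨rfl, rfl⟩
    exact ⟨rfl, rfl⟩

variable [MeasurableSpace Ω] {μ : Measure Ω}

theorem measurableSet_preimage_prodMk [MeasurableSpace B] [MeasurableSingletonClass B]
    [Countable B] [MeasurableSpace T] [MeasurableSingletonClass T] [Countable T]
    (hW : Measurable W) (hK : Measurable K) (s : Set (B × T)) :
    MeasurableSet ((fun ω => (W ω, K ω)) ⁻¹' s) :=
  hW.prodMk hK s.to_countable.measurableSet

theorem leftInverse_of_ae_decode {g : D × T → B}
    (hg : ∀ᵐ ω ∂μ, g (f (W ω, K ω), K ω) = W ω) {t : T}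
    (ht : ∀ b, μ (W ⁻¹' {b} ∩ K ⁻¹' {t}) ≠ 0) :
    Function.LeftInverse (fun d => g (d, t)) (fun b => f (b, t)) := by
  intro b
  obtain ⟨ω, ⟨hb, htω⟩, hω⟩ := Measure.exists_mem_of_measure_ne_zero_of_ae (ht b)
    (ae_restrict_of_ae hg)
  simp only [Set.mem_preimage, Set.mem_singleton_iff] at hb htω
  rwa [hb, htω] at hω

end Decoding

theorem uniform_output_of_decodable_general
    {Ω B T D : Type*} [MeasurableSpace Ω]
    [Fintype B] [Fintype T] [Fintype D]
    [MeasurableSpace B] [MeasurableSingletonClass B]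
    [MeasurableSpace T] [MeasurableSingletonClass T]
    (μ : Measure Ω) [IsProbabilityMeasure μ]
    (W : Ω → B) (K : Ω → T)
    (hW : Measurable W) (hK : Measurable K)
    (hunif : ∀ b : B, μ (W ⁻¹' {b}) = 1 / (Fintype.card B : ENNReal))
    (hindep : ∀ (b : B) (t : T),
      μ (W ⁻¹' {b} ∩ K ⁻¹' {t}) = μ (W ⁻¹' {b}) * μ (K ⁻¹' {t}))
    (hcard : Fintype.card D ≤ Fintype.card B)
    (f : B × T → D) (C : Ω → D) (hC : ∀ ω, C ω = f (W ω, K ω))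
    (g : D × T → B) (hg : μ {ω | g (C ω, K ω) = W ω} = 1) :
    Fintype.card D = Fintype.card B ∧
      (∀ d : D, μ (C ⁻¹' {d}) = 1 / (Fintype.card D : ENNReal)) ∧
      (∀ (d : D) (t : T),
        μ (C ⁻¹' {d} ∩ K ⁻¹' {t}) = μ (C ⁻¹' {d}) * μ (K ⁻¹' {t})) := by
  obtain rfl : C = fun ω => f (W ω, K ω) := funext hC
  have hdec : ∀ᵐ ω ∂μ, g (f (W ω, K ω), K ω) = W ω := by
    refine (ae_iff_measure_eq ?_).2 (by rw [hg, measure_univ])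
    exact (measurableSet_preimage_prodMk hW hK {p | g (f p, p.2) = p.1}).nullMeasurableSet
  have hbij (t : T) (ht : μ (K ⁻¹' {t}) ≠ 0) : Function.Bijective (fun b => f (b, t)) := by
    have hinj := (leftInverse_of_ae_decode (t := t) hdec fun b => by
      simp [hindep, hunif, ht]).injective
    exact (Fintype.bijective_iff_injective_and_card _).2
      ⟨hinj, le_antisymm (Fintype.card_le_of_injective _ hinj) hcard⟩
  obtain ⟨t₀, ht₀⟩ := exists_measure_preimage_singleton_ne_zero (μ := μ) hK
  have hcardeq : Fintype.card D = Fintype.card B := (Fintype.card_of_bijective (hbij t₀ ht₀)).symm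
  have hjoint (d : D) (t : T) : μ ((fun ω => f (W ω, K ω)) ⁻¹' {d} ∩ K ⁻¹' {t}) =
      1 / (Fintype.card D : ENNReal) * μ (K ⁻¹' {t}) := by
    by_cases ht : μ (K ⁻¹' {t}) = 0
    · rw [ht, mul_zero]
      exact measure_mono_null Set.inter_subset_right ht
    obtain ⟨b, rfl⟩ := (hbij t ht).surjective d
    rw [preimage_inter_preimage_eq_of_injective (hbij t ht).injective, hindep, hunif, hcardeq]
  have hmarg (d : D) := measure_eq_of_measure_inter_preimage_singleton_eq_mul hK (hjoint d)
  exact ⟨hcardeq, hmarg, fun d t => by rw [hjoint, hmarg]⟩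

/-- Let `W` be uniformly distributed on a finite nonempty set `B`, let `K` be a finitely
valued random variable independent of `W`, let `D` be a finite set with `|D| ≤ |B|`, and let
`C = f(W, K)` for some `f : B × T → D`. If `W` can be recovered from `(C, K)` almost surely,
then `|D| = |B|`, `C` is uniformly distributed on `D`, and `C` is independent of `K`. -/
theorem uniform_output_of_decodable
    {Ω B T D : Type*} [MeasurableSpace Ω]
    [Fintype B] [Nonempty B] [Fintype T] [Fintype D]
    [MeasurableSpace B] [MeasurableSingletonClass B]
    [MeasurableSpace T] [MeasurableSingletonClass T]
    (μ : Measure Ω) [IsProbabilityMeasure μ]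
    (W : Ω → B) (K : Ω → T)
    (hW : Measurable W) (hK : Measurable K)
    (hunif : ∀ b : B, μ (W ⁻¹' {b}) = 1 / (Fintype.card B : ENNReal))
    (hindep : ∀ (b : B) (t : T),
      μ (W ⁻¹' {b} ∩ K ⁻¹' {t}) = μ (W ⁻¹' {b}) * μ (K ⁻¹' {t}))
    (hcard : Fintype.card D ≤ Fintype.card B)
    (f : B × T → D) (C : Ω → D) (hC : ∀ ω, C ω = f (W ω, K ω))
    (g : D × T → B) (hg : μ {ω | g (C ω, K ω) = W ω} = 1) :
    Fintype.card D = Fintype.card B ∧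
      (∀ d : D, μ (C ⁻¹' {d}) = 1 / (Fintype.card D : ENNReal)) ∧
      (∀ (d : D) (t : T),
        μ (C ⁻¹' {d} ∩ K ⁻¹' {t}) = μ (C ⁻¹' {d}) * μ (K ⁻¹' {t})) :=
  uniform_output_of_decodable_general μ W K hW hK hunif hindep hcard f C hC g hg
end
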